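/- arXiv:0709.2255 — 3 statements merged into one kernel-verified Lean document; each statement's English description precedes it below -/
import Mathlib

section
/- For every α ∈ (−1,1), every t > 0, every x ∈ ℝ, and every y ∈ ℝ \ {0}, the Poisson kernel is nonnegative: P_α(t,x;y) ≥ 0. -/
/-!
Write `z = |x| + i t = ρ e^{iθ}` with `0 < θ ≤ π / 2`. The imaginary part in the numerator is
`ρ^(α+1) (y² sin ((1 + α) θ) + ρ² sin ((1 - α) θ))`. Concavity of `sin` on `[0, π]` bounds the
two sines below by `(1 ± α) / 2 · sin 2θ`, and weighted AM-GM then bounds `|y|^(-α)` times this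
below by `|y| ρ² sin 2θ = 2 |x| t |y| ≥ -2 x t y`.
-/

open MeasureTheory Filter Set
open scoped ENNReal NNReal

/-- The Poisson kernel `P_α(t,x;y)`, with complex powers taken in the principal branch. -/
noncomputable def poissonKernelAlpha (α t x y : ℝ) : ℝ :=
  (1 / Real.pi) *
    (2 * x * t * y +
        |y| ^ (-α) *
          (((((|x| : ℝ) : ℂ) + t * Complex.I) ^ ((α : ℂ) + 1) *
              ((y : ℂ) ^ 2 - (((|x| : ℝ) : ℂ) - t * Complex.I) ^ 2)).im)) /
    ((t ^ 2 + (x - y) ^ 2) * (t ^ 2 + (x + y) ^ 2))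

open Real ComplexConjugate

lemma Real.mul_sin_le_sin_mul {c u : ℝ} (hc₀ : 0 ≤ c) (hc₁ : c ≤ 1) (hu₀ : 0 ≤ u) (hu : u ≤ π) :
    c * sin u ≤ sin (c * u) := by
  simpa using strictConcaveOn_sin_Icc.concaveOn.2 (x := 0) (y := u)
    ⟨le_rfl, pi_pos.le⟩ ⟨hu₀, hu⟩ (sub_nonneg.2 hc₁) hc₀ (by ring)

lemma Real.rpow_mul_rpow_mul_sin_two_mul_le {a θ u ρ : ℝ} (ha₀ : 0 ≤ a) (ha₂ : a ≤ 2)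
    (hθ₀ : 0 ≤ θ) (hθ : θ ≤ π / 2) (hu : 0 ≤ u) (hρ : 0 ≤ ρ) :
    u ^ a * ρ ^ (2 - a) * sin (2 * θ) ≤ u ^ 2 * sin (a * θ) + ρ ^ 2 * sin ((2 - a) * θ) := by
  have h2θ₀ : 0 ≤ 2 * θ := by linarith
  have h2θ : 2 * θ ≤ π := by linarith
  have hsin_a : a / 2 * sin (2 * θ) ≤ sin (a * θ) := by
    convert mul_sin_le_sin_mul (c := a / 2) (by linarith) (by linarith) h2θ₀ h2θ using 2; ring
  have hsin_2a : (1 - a / 2) * sin (2 * θ) ≤ sin ((2 - a) * θ) := by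
    convert mul_sin_le_sin_mul (c := 1 - a / 2) (by linarith) (by linarith) h2θ₀ h2θ using 2; ring
  have hgm : u ^ a * ρ ^ (2 - a) ≤ a / 2 * u ^ 2 + (1 - a / 2) * ρ ^ 2 := by
    have := geom_mean_le_arith_mean2_weighted (p₁ := u ^ 2) (p₂ := ρ ^ 2) (w₁ := a / 2)
      (w₂ := 1 - a / 2) (by linarith) (by linarith) (by positivity) (by positivity) (by ring)
    rw [← rpow_two, ← rpow_two, ← rpow_mul hu, ← rpow_mul hρ, mul_div_cancel₀ _ two_ne_zero,
      mul_one_sub, mul_div_cancel₀ a two_ne_zero] at this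
    simpa only [rpow_two] using this
  calc u ^ a * ρ ^ (2 - a) * sin (2 * θ)
      ≤ (a / 2 * u ^ 2 + (1 - a / 2) * ρ ^ 2) * sin (2 * θ) :=
        mul_le_mul_of_nonneg_right hgm (sin_nonneg_of_nonneg_of_le_pi h2θ₀ h2θ)
    _ = u ^ 2 * (a / 2 * sin (2 * θ)) + ρ ^ 2 * ((1 - a / 2) * sin (2 * θ)) := by ring
    _ ≤ u ^ 2 * sin (a * θ) + ρ ^ 2 * sin ((2 - a) * θ) := by gcongr

lemma Complex.im_cpow_mul_sq_sub_conj_sq (z : ℂ) (a y : ℝ) :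
    (z ^ (a : ℂ) * ((y : ℂ) ^ 2 - conj z ^ 2)).im =
      ‖z‖ ^ a * (y ^ 2 * Real.sin (a * arg z) + ‖z‖ ^ 2 * Real.sin ((2 - a) * arg z)) := by
  have hre : z.re = ‖z‖ * Real.cos (arg z) := (norm_mul_cos_arg z).symm
  have him : z.im = ‖z‖ * Real.sin (arg z) := (norm_mul_sin_arg z).symm
  have hv_re : ((y : ℂ) ^ 2 - conj z ^ 2).re = y ^ 2 - (z.re ^ 2 - z.im ^ 2) := by
    simp [sq]
  have hv_im : ((y : ℂ) ^ 2 - conj z ^ 2).im = 2 * z.re * z.im := by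
    simp [sq]; ring
  rw [mul_im, cpow_ofReal_re, cpow_ofReal_im, hv_re, hv_im, hre, him,
    mul_comm (arg z) a, sub_mul, Real.sin_sub, Real.sin_two_mul, Real.cos_two_mul']
  ring

lemma Complex.two_mul_re_mul_im_mul_abs_le {z : ℂ} (hre : 0 ≤ z.re) (him : 0 < z.im) {a : ℝ}
    (ha₀ : 0 ≤ a) (ha₂ : a ≤ 2) {y : ℝ} (hy : y ≠ 0) :
    2 * z.re * z.im * |y| ≤ |y| ^ (1 - a) * (z ^ (a : ℂ) * ((y : ℂ) ^ 2 - conj z ^ 2)).im := by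
  have hρ : 0 < ‖z‖ := norm_pos_iff.2 fun h => by simp [h] at him
  have hu : 0 < |y| := abs_pos.2 hy
  have key := Real.rpow_mul_rpow_mul_sin_two_mul_le ha₀ ha₂ (arg_nonneg_iff.2 him.le)
    (arg_le_pi_div_two_iff.2 (Or.inl hre)) hu.le hρ.le
  have hreim : 2 * z.re * z.im = ‖z‖ ^ 2 * Real.sin (2 * arg z) := by
    rw [← norm_mul_cos_arg, ← norm_mul_sin_arg, Real.sin_two_mul]; ring
  have hu_pow : |y| ^ (1 - a) * |y| ^ a = |y| := by
    rw [← Real.rpow_add hu, sub_add_cancel, Real.rpow_one]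
  have hρ_pow : ‖z‖ ^ a * ‖z‖ ^ (2 - a) = ‖z‖ ^ 2 := by
    rw [← Real.rpow_add hρ, add_sub_cancel, Real.rpow_two]
  rw [im_cpow_mul_sq_sub_conj_sq, ← sq_abs y]
  calc 2 * z.re * z.im * |y|
      = |y| ^ (1 - a) * ‖z‖ ^ a * (|y| ^ a * ‖z‖ ^ (2 - a) * Real.sin (2 * arg z)) := by
        rw [hreim]
        linear_combination (-(‖z‖ ^ 2 * Real.sin (2 * arg z))) * hu_pow -
          (|y| ^ (1 - a) * |y| ^ a * Real.sin (2 * arg z)) * hρ_pow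
    _ ≤ |y| ^ (1 - a) * ‖z‖ ^ a * (|y| ^ 2 * Real.sin (a * arg z) +
          ‖z‖ ^ 2 * Real.sin ((2 - a) * arg z)) := by gcongr
    _ = _ := by ring

open Complex in
/-- for `α ∈ (-1,1)` the Poisson kernel is nonnegative. -/
theorem poissonKernel_nonneg
    (α : ℝ) (hα : α ∈ Ioo (-1 : ℝ) 1) (t : ℝ) (ht : 0 < t) (x : ℝ) (y : ℝ) (hy : y ≠ 0) :
    0 ≤ poissonKernelAlpha α t x y := by
  obtain ⟨hα₁, hα₂⟩ := hα
  unfold poissonKernelAlpha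
  set z : ℂ := ((|x| : ℝ) : ℂ) + t * I
  have hre : z.re = |x| := by simp [z]
  have him : z.im = t := by simp [z]
  have hconj : ((|x| : ℝ) : ℂ) - t * I = conj z := by simp [z, sub_eq_add_neg]
  rw [hconj, show (α : ℂ) + 1 = ((α + 1 : ℝ) : ℂ) by push_cast; rfl,
    show -α = 1 - (α + 1) by ring]
  have key := two_mul_re_mul_im_mul_abs_le (a := α + 1) (hre ▸ abs_nonneg x) (him ▸ ht)
    (by linarith) (by linarith) hy
  rw [hre, him] at key
  have hxy : -(|x| * |y|) ≤ x * y := abs_mul x y ▸ neg_abs_le (x * y)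
  have hxty := mul_le_mul_of_nonneg_left hxy (by positivity : (0 : ℝ) ≤ 2 * t)
  refine div_nonneg (mul_nonneg (by positivity) ?_) (by positivity)
  linarith
end

section
/- Let α ∈ (−1,1), set k := tan(πα/2), and let u ∈ C_c^∞(ℝ; ℝ). Define U(t,x) := ∫_ℝ P_α(t,x;y) u(y) dy for t > 0, x ∈ ℝ. Then for every t > 0 the one-sided partial derivatives ∂_x U(t,0⁺) := lim_{x→0⁺} ∂_x U(t,x) and ∂_x U(t,0⁻) := lim_{x→0⁻} ∂_x U(t,x) exist, the function t ↦ U(t,0) is differentiable, and ∂_x U(t,0⁺) − ∂_x U(t,0⁻) = 2k ∂_t U(t,0). (This is the transmission condition which, together with harmonicity in each quadrant, shows that U solves div A_k ∇U = 0 in the upper half plane for A_k(x) = [[1, k sgn(x)],[−k sgn(x), 1]].) -/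
open MeasureTheory Filter Set
open scoped ENNReal NNReal

namespace PoissonAux


noncomputable def den (t x y : ℝ) : ℝ := (t^2+(x-y)^2)*(t^2+(x+y)^2)
noncomputable def den' (t x y : ℝ) : ℝ := 2*(x-y)*(t^2+(x+y)^2) + (t^2+(x-y)^2)*(2*(x+y))
noncomputable def Phi (α t y : ℝ) (z : ℂ) : ℂ :=
  (z + t*Complex.I)^((α:ℂ)+1) * ((y:ℂ)^2 - (z - t*Complex.I)^2)
noncomputable def Phi' (α t y : ℝ) (z : ℂ) : ℂ :=
  (((α:ℂ)+1) * (z + t*Complex.I)^(α:ℂ)) * ((y:ℂ)^2 - (z - t*Complex.I)^2)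
    - (z + t*Complex.I)^((α:ℂ)+1) * (2*(z - t*Complex.I))

noncomputable def PA (t x y : ℝ) : ℝ := (1/Real.pi) * (2*x*t*y / den t x y)
noncomputable def PB (α t ε x y : ℝ) : ℝ := (1/Real.pi) * ((Phi α t y (ε*x)).im / den t x y)
noncomputable def QA (t x y : ℝ) : ℝ :=
  (1/Real.pi) * ((2*t*y * den t x y - 2*x*t*y * den' t x y) / (den t x y)^2)
noncomputable def QB (α t ε x y : ℝ) : ℝ :=
  (1/Real.pi) * ((ε * (Phi' α t y (ε*x)).im * den t x y
      - (Phi α t y (ε*x)).im * den' t x y) / (den t x y)^2)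

lemma den_pos {t : ℝ} (ht : t ≠ 0) (x y : ℝ) : 0 < den t x y := by
  unfold den; positivity

lemma hasDerivAt_im {f : ℝ → ℂ} {f' : ℂ} {x : ℝ} (h : HasDerivAt f f' x) :
    HasDerivAt (fun x => (f x).im) f'.im x :=
  (Complex.imCLM.hasFDerivAt.comp_hasDerivAt x h)

lemma hasDerivAt_Phi {α t y : ℝ} {z : ℂ} (h0 : z + t*Complex.I ∈ Complex.slitPlane) :
    HasDerivAt (Phi α t y) (Phi' α t y z) z := by
  have h1 : HasDerivAt (fun z : ℂ => (z + (t:ℂ)*Complex.I)^((α:ℂ)+1))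
      (((α:ℂ)+1) * (z + t*Complex.I)^(α:ℂ)) z := by
    have := ((hasDerivAt_id z).add_const ((t:ℂ)*Complex.I)).cpow_const (c := (α:ℂ)+1) h0
    simpa using this
  have h2 : HasDerivAt (fun z : ℂ => (y:ℂ)^2 - (z - (t:ℂ)*Complex.I)^2)
      (-(2*(z - (t:ℂ)*Complex.I))) z := by
    have hp : HasDerivAt (fun z : ℂ => (z - (t:ℂ)*Complex.I)^2)
        (2*(z - (t:ℂ)*Complex.I)) z := by
      have := ((hasDerivAt_id z).sub_const ((t:ℂ)*Complex.I)).pow 2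
      simp at this; exact this
    simpa using hp.const_sub ((y:ℂ)^2)
  have := h1.mul h2
  unfold Phi Phi'
  exact this.congr_deriv (by ring)

lemma hasDerivAt_den {t y : ℝ} (x : ℝ) : HasDerivAt (fun x => den t x y) (den' t x y) x := by
  have h1 : HasDerivAt (fun x : ℝ => t^2+(x-y)^2) (2*(x-y)) x := by
    have := (((hasDerivAt_id x).sub_const y).pow 2).const_add (t^2)
    simpa [mul_comm] using this
  have h2 : HasDerivAt (fun x : ℝ => t^2+(x+y)^2) (2*(x+y)) x := by
    have := (((hasDerivAt_id x).add_const y).pow 2).const_add (t^2)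
    simpa [mul_comm] using this
  unfold den den'; exact h1.mul h2

-- cpow eval
lemma cpow_mul_I {s : ℝ} (hs : 0 < s) (c : ℝ) :
    ((s:ℂ)*Complex.I)^(c:ℂ)
      = (((s^c : ℝ) : ℂ)) * (Real.cos (Real.pi*c/2) + Real.sin (Real.pi*c/2)*Complex.I) := by
  have hne : (s:ℂ)*Complex.I ≠ 0 := by
    simp [Complex.ext_iff, hs.ne']
  have harg : Complex.arg ((s:ℂ)*Complex.I) = Real.pi/2 := by
    have h := Complex.arg_mul_cos_add_sin_mul_I hs
      (θ := Real.pi/2) ⟨by linarith [Real.pi_pos], by linarith [Real.pi_pos]⟩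
    simpa using h
  have hlog : Complex.log ((s:ℂ)*Complex.I)
      = (Real.log s : ℂ) + (Real.pi/2 : ℝ) * Complex.I := by
    rw [Complex.log, harg]
    simp [Complex.norm_def, Complex.normSq_mk, abs_of_pos hs]
  rw [Complex.cpow_def_of_ne_zero hne, hlog]
  have : ((Real.log s : ℂ) + (Real.pi/2 : ℝ) * Complex.I) * (c:ℂ)
      = ((c * Real.log s : ℝ) : ℂ) + ((Real.pi*c/2 : ℝ) : ℂ) * Complex.I := by
    push_cast; ring
  rw [this, Complex.exp_add, ← Complex.ofReal_exp, mul_comm c (Real.log s),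
    ← Real.rpow_def_of_pos hs, Complex.exp_mul_I]
  push_cast
  ring


noncomputable def PK (α t ε x y : ℝ) : ℝ := PA t x y + |y|^(-α) * PB α t ε x y
noncomputable def PKd (α t ε x y : ℝ) : ℝ := QA t x y + |y|^(-α) * QB α t ε x y

lemma slit_aux {t : ℝ} (ht : t ≠ 0) (r : ℝ) :
    ((r:ℝ):ℂ) + (t:ℂ)*Complex.I ∈ Complex.slitPlane := by
  refine Complex.mem_slitPlane_iff.2 (Or.inr ?_)
  simp [ht]

lemma hasDerivAt_PhiReal {α t y : ℝ} (ht : t ≠ 0) (ε x : ℝ) :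
    HasDerivAt (fun x : ℝ => (Phi α t y ((ε*x : ℝ) : ℂ)).im)
      (ε * (Phi' α t y ((ε*x : ℝ) : ℂ)).im) x := by
  have h1 : HasDerivAt (Phi α t y) (Phi' α t y ((ε*x : ℝ) : ℂ)) ((ε*x : ℝ) : ℂ) :=
    hasDerivAt_Phi (slit_aux ht (ε*x))
  have h2 : HasDerivAt (fun s : ℝ => Phi α t y ((s:ℝ):ℂ)) (Phi' α t y ((ε*x : ℝ) : ℂ)) (ε*x) :=
    h1.comp_ofReal
  have h3 : HasDerivAt (fun x : ℝ => ε * x) ε x := by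
    simpa using (hasDerivAt_id x).const_mul ε
  have h4 := h2.scomp x h3
  have h5 := hasDerivAt_im h4
  simpa [Complex.smul_im] using h5

lemma hasDerivAt_PK {α t : ℝ} (ht : t ≠ 0) (ε x y : ℝ) :
    HasDerivAt (fun x => PK α t ε x y) (PKd α t ε x y) x := by
  have hden := (den_pos ht x y).ne'
  have hA : HasDerivAt (fun x => PA t x y) (QA t x y) x := by
    have hnum : HasDerivAt (fun x : ℝ => 2*x*t*y) (2*t*y) x := by
      have := ((hasDerivAt_id x).const_mul 2).mul_const (t*y)
      refine (this.congr_deriv (by ring)).congr_of_eventuallyEq (Eventually.of_forall fun z => ?_)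
      simp [id]; ring
    have := (hnum.div (hasDerivAt_den x) hden).const_mul (1/Real.pi)
    simpa [PA, QA] using this
  have hB : HasDerivAt (fun x => PB α t ε x y)
      ((1/Real.pi) * ((ε * (Phi' α t y ((ε*x:ℝ):ℂ)).im * den t x y
        - (Phi α t y ((ε*x:ℝ):ℂ)).im * den' t x y) / (den t x y)^2)) x := by
    have := ((hasDerivAt_PhiReal (α:=α) (y:=y) ht ε x).div (hasDerivAt_den x) hden).const_mul (1/Real.pi)
    simpa [PB] using this
  have := hA.add (hB.const_mul (|y|^(-α)))
  simp only [Complex.ofReal_mul] at this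
  unfold PK PKd QB; exact this


lemma den_zero (t y : ℝ) : den t 0 y = (t^2+y^2)^2 := by unfold den; ring
lemma den'_zero (t y : ℝ) : den' t 0 y = 0 := by unfold den'; ring

lemma cast_exp1 (α : ℝ) : ((α:ℂ)+1) = (((α+1 : ℝ)):ℂ) := by push_cast; ring

lemma Phi_zero_im {α t : ℝ} (ht : 0 < t) (y : ℝ) :
    (Phi α t y 0).im = Real.cos (Real.pi*α/2) * (t^(α+1) * (y^2+t^2)) := by
  have hB : Real.pi*(α+1)/2 = Real.pi*α/2 + Real.pi/2 := by ring
  unfold Phi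
  rw [show (0:ℂ) + (t:ℂ)*Complex.I = (t:ℂ)*Complex.I by ring, cast_exp1,
    cpow_mul_I ht (α+1), hB, Real.sin_add_pi_div_two, Real.cos_add_pi_div_two]
  simp [Complex.mul_im, Complex.mul_re, pow_two, -Complex.ofReal_cos, -Complex.ofReal_sin]
  ring

lemma Phi'_zero_im {α t : ℝ} (ht : 0 < t) (y : ℝ) :
    (Phi' α t y 0).im = Real.sin (Real.pi*α/2) * (t^α * ((α+1)*(y^2+t^2) - 2*t^2)) := by
  have hB : Real.pi*(α+1)/2 = Real.pi*α/2 + Real.pi/2 := by ring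
  unfold Phi'
  rw [show (0:ℂ) + (t:ℂ)*Complex.I = (t:ℂ)*Complex.I by ring, cast_exp1,
    cpow_mul_I ht (α+1), cpow_mul_I ht α, hB, Real.sin_add_pi_div_two,
    Real.cos_add_pi_div_two, Real.rpow_add_one ht.ne' α]
  simp [Complex.mul_im, Complex.mul_re, Complex.sub_im, Complex.sub_re, pow_two, -Complex.ofReal_cos, -Complex.ofReal_sin]
  ring


noncomputable def RB (α t s y : ℝ) : ℝ :=
  (Real.cos (Real.pi*α/2)/Real.pi) * ((max s (t/2))^(α+1) / ((max s (t/2))^2+y^2))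
noncomputable def RdB (α t s y : ℝ) : ℝ :=
  (Real.cos (Real.pi*α/2)/Real.pi) *
    ((max s (t/2))^α * ((α+1)*((max s (t/2))^2+y^2) - 2*(max s (t/2))^2)
      / ((max s (t/2))^2+y^2)^2)

lemma poissonKernel_eq_PK {α t : ℝ} (ht : t ≠ 0) {ε x : ℝ} (hx : ε*x = |x|) (y : ℝ) :
    poissonKernelAlpha α t x y = PK α t ε x y := by
  have hD := (den_pos ht x y).ne'
  unfold poissonKernelAlpha PK PA PB Phi
  rw [show ((ε:ℂ) * (x:ℂ)) = ((|x|:ℝ):ℂ) from by rw [← Complex.ofReal_mul, hx]]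
  unfold den at hD ⊢
  field_simp

lemma poissonKernel_zero {α s : ℝ} (hs : 0 < s) (y : ℝ) :
    poissonKernelAlpha α s 0 y
      = |y|^(-α) * ((Real.cos (Real.pi*α/2)/Real.pi) * (s^(α+1)/(s^2+y^2))) := by
  have h1 : s^2+y^2 ≠ 0 := by positivity
  unfold poissonKernelAlpha
  simp only [abs_zero, Complex.ofReal_zero]
  have h2 : ((0:ℂ) + ↑s*Complex.I)^((α:ℂ)+1) * ((y:ℂ)^2 - ((0:ℂ) - ↑s*Complex.I)^2)
      = Phi α s y 0 := rfl
  rw [h2, Phi_zero_im hs y]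
  field_simp [Real.pi_ne_zero]
  ring

lemma poissonKernel_zero_RB {α t : ℝ} (ht : 0 < t) {s : ℝ} (hs : t/2 < s) (y : ℝ) :
    poissonKernelAlpha α s 0 y = |y|^(-α) * RB α t s y := by
  rw [poissonKernel_zero (lt_trans (by positivity) hs), RB, max_eq_left hs.le]

lemma hasDerivAt_RB {α t y : ℝ} (ht : 0 < t) {s : ℝ} (hs : t/2 < s) :
    HasDerivAt (fun s => |y|^(-α) * RB α t s y) (|y|^(-α) * RdB α t s y) s := by
  have hs0 : 0 < s := lt_trans (by positivity) hs
  have hd : HasDerivAt (fun s : ℝ => (Real.cos (Real.pi*α/2)/Real.pi) * (s^(α+1)/(s^2+y^2)))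
      (RdB α t s y) s := by
    have h1 : HasDerivAt (fun s : ℝ => s^(α+1)) ((α+1)*s^α) s := by
      have := Real.hasDerivAt_rpow_const (x := s) (p := α+1) (Or.inl hs0.ne')
      simpa [add_sub_cancel_right] using this
    have h2 : HasDerivAt (fun s : ℝ => s^2+y^2) (2*s) s := by
      simpa [mul_comm] using ((hasDerivAt_pow 2 s).add_const (y^2))
    have hne : s^2+y^2 ≠ 0 := by positivity
    have := (h1.div h2 hne).const_mul (Real.cos (Real.pi*α/2)/Real.pi)
    refine this.congr_deriv (Eq.symm ?_)
    unfold RdB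
    rw [max_eq_left hs.le, Real.rpow_add_one hs0.ne' α]
    rw [mul_div_assoc]
    congr 1
    ring
  have hev : (fun s => |y|^(-α) * RB α t s y)
      =ᶠ[nhds s] (fun s => |y|^(-α)
        * ((Real.cos (Real.pi*α/2)/Real.pi) * (s^(α+1)/(s^2+y^2)))) := by
    filter_upwards [eventually_gt_nhds hs] with s' hs'
    rw [RB, max_eq_left hs'.le]
  exact (hd.const_mul (|y|^(-α))).congr_of_eventuallyEq hev


lemma cos_ne {α : ℝ} (hα : α ∈ Ioo (-1:ℝ) 1) : 0 < Real.cos (Real.pi*α/2) := by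
  apply Real.cos_pos_of_mem_Ioo
  obtain ⟨h1, h2⟩ := hα
  constructor <;> [nlinarith [Real.pi_pos]; nlinarith [Real.pi_pos]]

lemma transmission_pointwise {α t : ℝ} (ht : 0 < t) (hα : α ∈ Ioo (-1:ℝ) 1) (y : ℝ) :
    PKd α t 1 0 y - PKd α t (-1) 0 y
      = 2 * Real.tan (Real.pi*α/2) * (|y|^(-α) * RdB α t t y) := by
  have hcos := (cos_ne hα).ne'
  have hty : t^2+y^2 ≠ 0 := by positivity
  unfold PKd QA QB RdB
  rw [den'_zero, den_zero, max_eq_left (by linarith : t/2 ≤ t)]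
  norm_num
  rw [Phi'_zero_im ht y, Real.tan_eq_sin_div_cos]
  field_simp
  have hc' : Real.cos (α * Real.pi * (1 / 2)) ≠ 0 := by
    rwa [show α * Real.pi * (1/2) = Real.pi*α/2 by ring]
  ring_nf
  simp only [mul_inv_cancel_right₀ hc']


section Continuity
variable {α t ε : ℝ}

lemma continuous_base (ht : t ≠ 0) (ε : ℝ) :
    Continuous fun p : ℝ×ℝ => ((ε:ℂ) * (p.1:ℂ) + (t:ℂ)*Complex.I) := by
  fun_prop

lemma continuous_cpow (ht : t ≠ 0) (c : ℂ) (ε : ℝ) :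
    Continuous fun p : ℝ×ℝ => ((ε:ℂ) * (p.1:ℂ) + (t:ℂ)*Complex.I) ^ c := by
  rw [continuous_iff_continuousAt]
  intro p
  refine ((continuous_base ht ε).continuousAt).cpow continuousAt_const ?_
  exact Complex.mem_slitPlane_iff.2 (Or.inr (by simp [ht]))

lemma continuous_PhiIm (ht : t ≠ 0) :
    Continuous fun p : ℝ×ℝ => (Phi α t p.2 ((ε:ℂ) * (p.1:ℂ))).im := by
  unfold Phi
  refine Complex.continuous_im.comp (((continuous_cpow ht _ ε)).mul ?_)
  fun_prop

lemma continuous_Phi'Im (ht : t ≠ 0) :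
    Continuous fun p : ℝ×ℝ => (Phi' α t p.2 ((ε:ℂ) * (p.1:ℂ))).im := by
  unfold Phi'
  refine Complex.continuous_im.comp (Continuous.sub ?_ ?_)
  · exact ((continuous_const.mul (continuous_cpow ht _ ε)).mul (by fun_prop))
  · exact ((continuous_cpow ht _ ε).mul (by fun_prop))

lemma continuous_den2 : Continuous fun p : ℝ×ℝ => den t p.1 p.2 := by unfold den; fun_prop
lemma continuous_den'2 : Continuous fun p : ℝ×ℝ => den' t p.1 p.2 := by unfold den'; fun_prop

lemma continuous_PA (ht : t ≠ 0) : Continuous fun p : ℝ×ℝ => PA t p.1 p.2 := by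
  unfold PA
  exact continuous_const.mul ((by fun_prop : Continuous fun p : ℝ×ℝ => 2*p.1*t*p.2).div
    continuous_den2 fun p => (den_pos ht p.1 p.2).ne')

lemma continuous_PB (ht : t ≠ 0) : Continuous fun p : ℝ×ℝ => PB α t ε p.1 p.2 := by
  unfold PB
  exact continuous_const.mul ((continuous_PhiIm ht).div
    continuous_den2 fun p => (den_pos ht p.1 p.2).ne')

lemma continuous_QA (ht : t ≠ 0) : Continuous fun p : ℝ×ℝ => QA t p.1 p.2 := by
  unfold QA
  refine continuous_const.mul (Continuous.div ?_ (continuous_den2.pow 2)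
    fun p => pow_ne_zero _ (den_pos ht p.1 p.2).ne')
  exact ((by fun_prop : Continuous fun p : ℝ×ℝ => 2*t*p.2).mul continuous_den2).sub
    ((by fun_prop : Continuous fun p : ℝ×ℝ => 2*p.1*t*p.2).mul continuous_den'2)

lemma continuous_QB (ht : t ≠ 0) : Continuous fun p : ℝ×ℝ => QB α t ε p.1 p.2 := by
  unfold QB
  refine continuous_const.mul (Continuous.div ?_ (continuous_den2.pow 2)
    fun p => pow_ne_zero _ (den_pos ht p.1 p.2).ne')
  exact ((continuous_const.mul (continuous_Phi'Im ht)).mul continuous_den2).sub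
    ((continuous_PhiIm ht).mul continuous_den'2)

lemma continuous_max_rpow (ht : 0 < t) (c : ℝ) :
    Continuous fun p : ℝ×ℝ => (max p.1 (t/2)) ^ c := by
  rw [continuous_iff_continuousAt]
  intro p
  have hpos : (0:ℝ) < max p.1 (t/2) := lt_of_lt_of_le (by positivity) (le_max_right _ _)
  exact ContinuousAt.comp (g := fun x : ℝ => x ^ c) (x := p)
    (Real.continuousAt_rpow_const (max p.1 (t/2)) c (Or.inl hpos.ne'))
    ((continuous_fst.max continuous_const).continuousAt)

lemma continuous_RdB (ht : 0 < t) : Continuous fun p : ℝ×ℝ => RdB α t p.1 p.2 := by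
  unfold RdB
  have hm : Continuous fun p : ℝ×ℝ => max p.1 (t/2) := continuous_fst.max continuous_const
  have hden : Continuous fun p : ℝ×ℝ => (max p.1 (t/2))^2 + p.2^2 := by fun_prop
  refine continuous_const.mul (Continuous.div ?_ (hden.pow 2) fun p => ?_)
  · exact (continuous_max_rpow ht α).mul (by fun_prop)
  · have hpos : (0:ℝ) < max p.1 (t/2) := lt_of_lt_of_le (by positivity) (le_max_right _ _)
    have : (0:ℝ) < (max p.1 (t/2))^2 + p.2^2 := by positivity
    positivity

end Continuity


section Integrab

lemma integrableOn_abs_rpow {α : ℝ} (hα1 : α < 1) {R : ℝ} (hR : 0 ≤ R) :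
    IntegrableOn (fun y : ℝ => |y| ^ (-α)) (Icc (-R) R) := by
  have h0 : IntervalIntegrable (fun y : ℝ => |y| ^ (-α)) volume 0 R := by
    have h1 : IntervalIntegrable (fun y : ℝ => y ^ (-α)) volume 0 R :=
      intervalIntegral.intervalIntegrable_rpow' (by linarith)
    rw [intervalIntegrable_iff] at h1 ⊢
    refine h1.congr_fun ?_ measurableSet_uIoc
    intro y hy
    rw [Set.uIoc_of_le hR] at hy
    simp only
    rw [abs_of_pos hy.1]
  have h2 : IntervalIntegrable (fun y : ℝ => |y| ^ (-α)) volume (-R) 0 := by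
    have := ((IntervalIntegrable.iff_comp_neg (f := fun y : ℝ => |y| ^ (-α))).1 h0)
    simpa using this.symm
  have h := h2.trans h0
  rwa [intervalIntegrable_iff_integrableOn_Icc_of_le (by linarith)] at h

variable {u : ℝ → ℝ} {α R : ℝ} {A B : ℝ → ℝ → ℝ}

lemma shape_aesm (hu : Continuous u)
    (hA : Continuous fun p : ℝ×ℝ => A p.1 p.2) (hB : Continuous fun p : ℝ×ℝ => B p.1 p.2)
    (x : ℝ) :
    AEStronglyMeasurable (fun y => (A x y + |y|^(-α) * B x y) * u y) volume := by
  have m1 : Measurable fun y : ℝ => |y|^(-α) := by fun_prop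
  have hAx : Continuous fun y => A x y := hA.comp (continuous_const.prodMk continuous_id)
  have hBx : Continuous fun y => B x y := hB.comp (continuous_const.prodMk continuous_id)
  exact ((hAx.measurable.add (m1.mul hBx.measurable)).mul hu.measurable).aestronglyMeasurable

lemma shape_bound (hu : Continuous u) (hus : HasCompactSupport u) (hα1 : α < 1)
    (hRsupp : tsupport u ⊆ Icc (-R) R) (hR : 0 ≤ R)
    (hA : Continuous fun p : ℝ×ℝ => A p.1 p.2) (hB : Continuous fun p : ℝ×ℝ => B p.1 p.2)
    (a b : ℝ) :
    ∃ bound : ℝ → ℝ, Integrable bound ∧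
      ∀ x ∈ Icc a b, ∀ y, |(A x y + |y|^(-α) * B x y) * u y| ≤ bound y := by
  obtain ⟨CA, hCA⟩ := (isCompact_Icc.prod (isCompact_Icc (a := -R)
    (b := R))).exists_bound_of_continuousOn hA.continuousOn
  obtain ⟨CB, hCB⟩ := (isCompact_Icc.prod (isCompact_Icc (a := -R)
    (b := R))).exists_bound_of_continuousOn hB.continuousOn
  obtain ⟨M, hM⟩ := hu.bounded_above_of_compact_support hus
  have hM0 : 0 ≤ M := le_trans (norm_nonneg _) (hM 0)
  refine ⟨fun y => (|CA| + |CB| * |y|^(-α)) * |u y|, ?_, ?_⟩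
  · have hrw : (fun y => (|CA| + |CB| * |y|^(-α)) * |u y|)
        = fun y => |CA| * |u y| + |CB| * (|y|^(-α) * |u y|) := by
      funext y; ring
    rw [hrw]
    have hui : Integrable u := hu.integrable_of_hasCompactSupport hus
    refine (hui.abs.const_mul _).add (Integrable.const_mul ?_ _)
    have m1 : Measurable fun y : ℝ => |y|^(-α) := by fun_prop
    refine Integrable.mono'
      (g := (Icc (-R) R).indicator (fun y => M * |y|^(-α))) ?_ ?_ ?_
    · exact MeasureTheory.IntegrableOn.integrable_indicator
        ((integrableOn_abs_rpow hα1 hR).const_mul M) measurableSet_Icc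
    · exact (m1.mul hu.measurable.abs).aestronglyMeasurable
    · refine Eventually.of_forall fun y => ?_
      by_cases hy : u y = 0
      · simp only [hy, abs_zero, mul_zero, Real.norm_eq_abs, abs_zero]
        exact Set.indicator_nonneg
          (fun z _ => by positivity) y
      · have hyy : y ∈ Icc (-R) R := hRsupp (subset_tsupport u hy)
        rw [Set.indicator_of_mem hyy, Real.norm_eq_abs]
        have h1 : 0 ≤ |y|^(-α) := Real.rpow_nonneg (abs_nonneg y) _
        rw [abs_of_nonneg (by positivity)]
        rw [mul_comm M _]
        exact mul_le_mul_of_nonneg_left (by simpa using hM y) h1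
  · intro x hx y
    by_cases hy : u y = 0
    · simp [hy]
    · have hyy : y ∈ Icc (-R) R := hRsupp (subset_tsupport u hy)
      have h1 : 0 ≤ |y|^(-α) := Real.rpow_nonneg (abs_nonneg y) _
      rw [abs_mul]
      refine mul_le_mul_of_nonneg_right ?_ (abs_nonneg _)
      calc |A x y + |y|^(-α) * B x y| ≤ |A x y| + |y|^(-α) * |B x y| := by
            refine (abs_add_le _ _).trans ?_
            rw [abs_mul, abs_of_nonneg h1]
        _ ≤ |CA| + |CB| * |y|^(-α) := by
            have h2 := hCA (x, y) ⟨hx, hyy⟩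
            have h3 := hCB (x, y) ⟨hx, hyy⟩
            rw [Real.norm_eq_abs] at h2 h3
            have := mul_le_mul_of_nonneg_left
              (h3.trans (le_abs_self CB)) h1
            nlinarith [h2.trans (le_abs_self CA)]

end Integrab


section DominatedLemmas

variable {α t R : ℝ} {u : ℝ → ℝ}

lemma continuous_RB2 (ht : 0 < t) {α : ℝ} :
    Continuous fun p : ℝ×ℝ => RB α t p.1 p.2 := by
  unfold RB
  have hden : Continuous fun p : ℝ×ℝ => (max p.1 (t/2))^2 + p.2^2 := by fun_prop
  refine continuous_const.mul (Continuous.div (continuous_max_rpow ht (α+1)) hden fun p => ?_)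
  have hpos : (0:ℝ) < max p.1 (t/2) := lt_of_lt_of_le (by positivity) (le_max_right _ _)
  positivity

set_option maxHeartbeats 1000000 in
lemma hasDerivAt_int_PK (hu : Continuous u) (hus : HasCompactSupport u) (ht : 0 < t)
    (hα1 : α < 1) (hRsupp : tsupport u ⊆ Icc (-R) R) (hR : 0 ≤ R) (ε x₀ : ℝ) :
    Integrable (fun y => PKd α t ε x₀ y * u y) ∧
    HasDerivAt (fun x => ∫ y, PK α t ε x y * u y) (∫ y, PKd α t ε x₀ y * u y) x₀ := by
  obtain ⟨bound, hbi, hb⟩ := shape_bound hu hus hα1 hRsupp hR (continuous_QA ht.ne')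
    (continuous_QB (α := α) (ε := ε) ht.ne') (x₀-1) (x₀+1)
  obtain ⟨bound0, hbi0, hb0⟩ := shape_bound hu hus hα1 hRsupp hR (continuous_PA ht.ne')
    (continuous_PB (α := α) (ε := ε) ht.ne') x₀ x₀
  have hball : ∀ x ∈ Metric.ball x₀ 1, x ∈ Icc (x₀-1) (x₀+1) := by
    intro x hx
    rw [Metric.mem_ball, Real.dist_eq, abs_lt] at hx
    exact ⟨by linarith [hx.1], by linarith [hx.2]⟩
  have haesm : ∀ x : ℝ, AEStronglyMeasurable (fun y => PK α t ε x y * u y) volume :=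
    fun x => shape_aesm hu (continuous_PA ht.ne') (continuous_PB ht.ne') x
  have haesm' : ∀ x : ℝ, AEStronglyMeasurable (fun y => PKd α t ε x y * u y) volume :=
    fun x => shape_aesm hu (continuous_QA ht.ne') (continuous_QB ht.ne') x
  have H := hasDerivAt_integral_of_dominated_loc_of_deriv_le (μ := volume)
    (F := fun x y => PK α t ε x y * u y) (F' := fun x y => PKd α t ε x y * u y)
    (x₀ := x₀) (bound := bound) (Metric.ball_mem_nhds x₀ one_pos)
    (Eventually.of_forall fun x => haesm x)
    (Integrable.mono' hbi0 (haesm x₀)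
      (Eventually.of_forall fun y => by
        rw [Real.norm_eq_abs]; exact hb0 x₀ ⟨le_rfl, le_rfl⟩ y))
    (haesm' x₀)
    (Eventually.of_forall fun y => fun x hx => by
      rw [Real.norm_eq_abs]; exact hb x (hball x hx) y)
    hbi
    (Eventually.of_forall fun y => fun x _ =>
      (hasDerivAt_PK ht.ne' ε x y).mul_const (u y))
  exact H

lemma continuous_cpow1 {t : ℝ} (ht : t ≠ 0) (c : ℂ) (ε : ℝ) :
    Continuous fun x : ℝ => ((ε:ℂ) * (x:ℂ) + (t:ℂ)*Complex.I) ^ c := by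
  rw [continuous_iff_continuousAt]
  intro x
  refine ContinuousAt.cpow (by fun_prop) continuousAt_const ?_
  exact Complex.mem_slitPlane_iff.2 (Or.inr (by simp [ht]))

lemma continuous_PhiIm1 {α t : ℝ} (ht : t ≠ 0) (ε y : ℝ) :
    Continuous fun x : ℝ => (Phi α t y ((ε:ℂ) * (x:ℂ))).im := by
  unfold Phi
  exact Complex.continuous_im.comp ((continuous_cpow1 ht _ ε).mul (by fun_prop))

lemma continuous_Phi'Im1 {α t : ℝ} (ht : t ≠ 0) (ε y : ℝ) :
    Continuous fun x : ℝ => (Phi' α t y ((ε:ℂ) * (x:ℂ))).im := by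
  unfold Phi'
  refine Complex.continuous_im.comp (Continuous.sub ?_ ?_)
  · exact ((continuous_const.mul (continuous_cpow1 ht _ ε)).mul (by fun_prop))
  · exact ((continuous_cpow1 ht _ ε).mul (by fun_prop))

lemma continuous_QA1 {t : ℝ} (ht : t ≠ 0) (y : ℝ) :
    Continuous fun x : ℝ => QA t x y := by
  unfold QA den den'
  have hd : ∀ x : ℝ, (t^2+(x-y)^2)*(t^2+(x+y)^2) ≠ 0 := fun x => by positivity
  exact continuous_const.mul (Continuous.div (by fun_prop)
    ((by fun_prop : Continuous fun x : ℝ => (t^2+(x-y)^2)*(t^2+(x+y)^2)).pow 2)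
    fun x => pow_ne_zero _ (hd x))

lemma continuous_QB1 {α t : ℝ} (ht : t ≠ 0) (ε y : ℝ) :
    Continuous fun x : ℝ => QB α t ε x y := by
  unfold QB
  have hd : ∀ x : ℝ, den t x y ≠ 0 := fun x => (den_pos ht x y).ne'
  refine continuous_const.mul (Continuous.div ?_
    ((continuous_den2.comp (continuous_id.prodMk continuous_const)).pow 2)
    fun x => pow_ne_zero _ (hd x))
  have h1 : Continuous fun x : ℝ => den t x y := by unfold den; fun_prop
  have h2 : Continuous fun x : ℝ => den' t x y := by unfold den'; fun_prop
  exact ((continuous_const.mul (continuous_Phi'Im1 ht ε y)).mul h1).sub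
    ((continuous_PhiIm1 ht ε y).mul h2)

set_option maxHeartbeats 1000000 in
lemma continuousAt_int_PKd (hu : Continuous u) (hus : HasCompactSupport u) (ht : 0 < t)
    (hα1 : α < 1) (hRsupp : tsupport u ⊆ Icc (-R) R) (hR : 0 ≤ R) (ε : ℝ) :
    ContinuousAt (fun x => ∫ y, PKd α t ε x y * u y) 0 := by
  obtain ⟨bound, hbi, hb⟩ := shape_bound hu hus hα1 hRsupp hR (continuous_QA ht.ne')
    (continuous_QB (α := α) (ε := ε) ht.ne') (-1) 1
  refine continuousAt_of_dominated ?_ ?_ hbi ?_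
  · exact Eventually.of_forall fun x =>
      shape_aesm hu (continuous_QA ht.ne') (continuous_QB ht.ne') x
  · filter_upwards [Icc_mem_nhds (by norm_num : (-1:ℝ) < 0) (by norm_num : (0:ℝ) < 1)]
      with x hx
    exact Eventually.of_forall fun y => by
      rw [Real.norm_eq_abs]; exact hb x hx y
  · refine Eventually.of_forall fun y => ?_
    show ContinuousAt (fun x => (QA t x y + |y|^(-α) * QB α t ε x y) * u y) 0
    exact (((continuous_QA1 ht.ne' y).add
      (continuous_const.mul (continuous_QB1 ht.ne' ε y))).mul continuous_const).continuousAt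

lemma mem_ball_t {t s : ℝ} (ht : 0 < t) (hs : s ∈ Metric.ball t (t/2)) : t/2 < s := by
  rw [Metric.mem_ball, Real.dist_eq, abs_lt] at hs
  linarith [hs.1]

set_option maxHeartbeats 1000000 in
lemma hasDerivAt_int_t (hu : Continuous u) (hus : HasCompactSupport u) (ht : 0 < t)
    (hα1 : α < 1) (hRsupp : tsupport u ⊆ Icc (-R) R) (hR : 0 ≤ R) :
    Integrable (fun y => ((0:ℝ) + |y|^(-α) * RdB α t t y) * u y) ∧
    HasDerivAt (fun s => ∫ y, poissonKernelAlpha α s 0 y * u y)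
      (∫ y, ((0:ℝ) + |y|^(-α) * RdB α t t y) * u y) t := by
  obtain ⟨bound, hbi, hb⟩ := shape_bound (B := fun s y => RdB α t s y)
    (A := fun _ _ => (0:ℝ)) hu hus hα1 hRsupp hR continuous_const
    (continuous_RdB ht) (t/2) (3*t/2)
  obtain ⟨bound0, hbi0, hb0⟩ := shape_bound (B := fun s y => RB α t s y)
    (A := fun _ _ => (0:ℝ)) hu hus hα1 hRsupp hR continuous_const
    (continuous_RB2 ht) t t
  have hball : ∀ s ∈ Metric.ball t (t/2), s ∈ Icc (t/2) (3*t/2) := by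
    intro s hs
    rw [Metric.mem_ball, Real.dist_eq, abs_lt] at hs
    exact ⟨by linarith [hs.1], by linarith [hs.2]⟩
  have hpk : ∀ s ∈ Metric.ball t (t/2), (fun y => poissonKernelAlpha α s 0 y * u y)
      = fun y => ((0:ℝ) + |y|^(-α) * RB α t s y) * u y := by
    intro s hs
    funext y
    rw [poissonKernel_zero_RB ht (mem_ball_t ht hs) y, zero_add]
  have hpkt := hpk t (Metric.mem_ball_self (half_pos ht))
  have haesmRB : ∀ s : ℝ, AEStronglyMeasurable
      (fun y => ((0:ℝ) + |y|^(-α) * RB α t s y) * u y) volume :=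
    fun s => shape_aesm (A := fun _ _ => (0:ℝ)) (B := fun s y => RB α t s y)
      hu continuous_const (continuous_RB2 ht) s
  have haesmRdB : AEStronglyMeasurable
      (fun y => ((0:ℝ) + |y|^(-α) * RdB α t t y) * u y) volume :=
    shape_aesm (A := fun _ _ => (0:ℝ)) (B := fun s y => RdB α t s y)
      hu continuous_const (continuous_RdB ht) t
  have H := hasDerivAt_integral_of_dominated_loc_of_deriv_le (μ := volume)
    (F := fun s y => poissonKernelAlpha α s 0 y * u y)
    (F' := fun s y => ((0:ℝ) + |y|^(-α) * RdB α t s y) * u y)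
    (x₀ := t) (bound := bound) (Metric.ball_mem_nhds t (half_pos ht))
    (by
      filter_upwards [Metric.ball_mem_nhds t (half_pos ht)] with s hs
      show AEStronglyMeasurable (fun y => poissonKernelAlpha α s 0 y * u y) volume
      rw [hpk s hs]
      exact haesmRB s)
    (by
      show Integrable (fun y => poissonKernelAlpha α t 0 y * u y) volume
      rw [hpkt]
      refine Integrable.mono' hbi0 (haesmRB t) ?_
      exact Eventually.of_forall fun y => by
        rw [Real.norm_eq_abs]; exact hb0 t ⟨le_rfl, le_rfl⟩ y)
    haesmRdB
    (Eventually.of_forall fun y => fun s hs => by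
      rw [Real.norm_eq_abs]; exact hb s (hball s hs) y)
    hbi
    (Eventually.of_forall fun y => fun s hs => by
      have h := (hasDerivAt_RB (y := y) (α := α) ht (mem_ball_t ht hs))
      have hev : (fun s' => poissonKernelAlpha α s' 0 y)
          =ᶠ[nhds s] fun s' => |y|^(-α) * RB α t s' y := by
        filter_upwards [eventually_gt_nhds (mem_ball_t ht hs)] with s' hs'
        exact poissonKernel_zero_RB ht hs' y
      have h2 := (h.congr_of_eventuallyEq hev).mul_const (u y)
      show HasDerivAt (fun s => poissonKernelAlpha α s 0 y * u y)
        (((0:ℝ) + |y|^(-α) * RdB α t s y) * u y) s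
      rw [zero_add]
      exact h2)
  exact H

end DominatedLemmas

end PoissonAux

/-- the transmission condition
`∂ₓU(t,0⁺) - ∂ₓU(t,0⁻) = 2k ∂ₜU(t,0)` for the Poisson integral
`U(t,x) = ∫ P_α(t,x;y)u(y) dy`, where `k = tan(πα/2)` and `α ∈ (-1,1)`. -/
theorem poisson_integral_transmission_condition
    (α : ℝ) (hα : α ∈ Ioo (-1 : ℝ) 1)
    (k : ℝ) (hk : k = Real.tan (Real.pi * α / 2))
    (u : ℝ → ℝ) (hu : ContDiff ℝ (⊤ : ℕ∞) u) (hus : HasCompactSupport u)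
    (U : ℝ → ℝ → ℝ)
    (hU : ∀ t x : ℝ, U t x = ∫ y : ℝ, poissonKernelAlpha α t x y * u y) :
    ∀ t : ℝ, 0 < t →
      ∃ Dplus Dminus Dt : ℝ,
        Tendsto (fun x : ℝ => deriv (U t) x) (nhdsWithin 0 (Ioi 0)) (nhds Dplus) ∧
        Tendsto (fun x : ℝ => deriv (U t) x) (nhdsWithin 0 (Iio 0)) (nhds Dminus) ∧
        HasDerivAt (fun s : ℝ => U s 0) Dt t ∧
        Dplus - Dminus = 2 * k * Dt := by
  have hα1 : α < 1 := hα.2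
  have hu' : Continuous u := hu.continuous
  obtain ⟨r, hr⟩ := hus.isBounded.subset_closedBall (0:ℝ)
  set R := max r 0 with hRdef
  have hR : 0 ≤ R := le_max_right r 0
  have hRsupp : tsupport u ⊆ Icc (-R) R := by
    intro y hy
    have h1 := hr hy
    rw [Real.closedBall_eq_Icc] at h1
    obtain ⟨h2, h3⟩ := h1
    have h4 : r ≤ R := le_max_left r 0
    exact ⟨by simp only [zero_sub] at h2; linarith, by simp only [zero_add] at h3; linarith⟩
  intro t ht
  refine ⟨∫ y, PoissonAux.PKd α t 1 0 y * u y, ∫ y, PoissonAux.PKd α t (-1) 0 y * u y,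
    ∫ y, ((0:ℝ) + |y|^(-α) * PoissonAux.RdB α t t y) * u y, ?_, ?_, ?_, ?_⟩
  · -- plus side
    have hplus : ∀ x ∈ Ioi (0:ℝ), deriv (U t) x = ∫ y, PoissonAux.PKd α t 1 x y * u y := by
      intro x hx
      have hev : U t =ᶠ[nhds x] fun x' => ∫ y, PoissonAux.PK α t 1 x' y * u y := by
        filter_upwards [eventually_gt_nhds hx] with z hz
        rw [hU t z]
        congr 1
        funext y
        rw [PoissonAux.poissonKernel_eq_PK ht.ne' (by rw [one_mul, abs_of_pos hz]) y]
      rw [hev.deriv_eq]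
      exact (PoissonAux.hasDerivAt_int_PK hu' hus ht hα1 hRsupp hR 1 x).2.deriv
    refine Tendsto.congr' ?_
      (((PoissonAux.continuousAt_int_PKd hu' hus ht hα1 hRsupp hR 1).tendsto).mono_left
        nhdsWithin_le_nhds)
    filter_upwards [self_mem_nhdsWithin] with x hx
    exact (hplus x hx).symm
  · -- minus side
    have hminus : ∀ x ∈ Iio (0:ℝ), deriv (U t) x = ∫ y, PoissonAux.PKd α t (-1) x y * u y := by
      intro x hx
      have hev : U t =ᶠ[nhds x] fun x' => ∫ y, PoissonAux.PK α t (-1) x' y * u y := by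
        filter_upwards [eventually_lt_nhds hx] with z hz
        rw [hU t z]
        congr 1
        funext y
        rw [PoissonAux.poissonKernel_eq_PK ht.ne' (by rw [abs_of_neg hz, neg_one_mul]) y]
      rw [hev.deriv_eq]
      exact (PoissonAux.hasDerivAt_int_PK hu' hus ht hα1 hRsupp hR (-1) x).2.deriv
    refine Tendsto.congr' ?_
      (((PoissonAux.continuousAt_int_PKd hu' hus ht hα1 hRsupp hR (-1)).tendsto).mono_left
        nhdsWithin_le_nhds)
    filter_upwards [self_mem_nhdsWithin] with x hx
    exact (hminus x hx).symm
  · -- time derivative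
    have h3 := (PoissonAux.hasDerivAt_int_t hu' hus ht hα1 hRsupp hR).2
    have heq : (fun s => U s 0) = fun s => ∫ y, poissonKernelAlpha α s 0 y * u y :=
      funext fun s => hU s 0
    rw [heq]
    exact h3
  · -- transmission identity
    have hi1 := (PoissonAux.hasDerivAt_int_PK hu' hus ht hα1 hRsupp hR 1 0).1
    have hi2 := (PoissonAux.hasDerivAt_int_PK hu' hus ht hα1 hRsupp hR (-1) 0).1
    rw [← integral_sub hi1 hi2]
    have hpt : (fun y => PoissonAux.PKd α t 1 0 y * u y - PoissonAux.PKd α t (-1) 0 y * u y)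
        = fun y => (2*k) * ((((0:ℝ) + |y|^(-α) * PoissonAux.RdB α t t y)) * u y) := by
      funext y
      have h5 := PoissonAux.transmission_pointwise ht hα y
      rw [← sub_mul, h5, hk, zero_add]
      ring
    rw [hpt, integral_const_mul]
end

section
/- Let α ∈ (−2,−1) and let u : ℝ → ℝ be continuous with compact support, u ≥ 0, and ∫_ℝ u > 0. Define U(t,0) := ∫_ℝ P_α(t,0;y) u(y) dy = (cos(πα/2)/π) ∫_ℝ ( t^{1+α} |y|^{−α} / (t² + y²) ) u(y) dy for t > 0. Then lim_{t→0⁺} U(t,0) = −∞. (This shows the signed harmonic measure for this branch does not contradict the maximum principle: the solution is unbounded below near the origin even for nonnegative smooth boundary data.) -/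
open MeasureTheory Filter Set
open scoped ENNReal NNReal

/-! For `-2 < α < -1` the prefactor `cos (π α / 2) / π` is negative, while for `0 < t ≤ 1`
the integral is at least `t ^ (1 + α) * ∫ |y| ^ (-α) / (1 + y ^ 2) * u y`. The last integral
is positive because its weight vanishes only at `y = 0`, and `t ^ (1 + α) → ∞` since
`1 + α < 0`. -/

lemma Real.cos_pi_mul_div_two_neg {α : ℝ} (h₁ : -3 < α) (h₂ : α < -1) :
    Real.cos (Real.pi * α / 2) < 0 := by
  have hπ := Real.pi_pos
  rw [← Real.cos_neg]
  exact Real.cos_neg_of_pi_div_two_lt_of_lt (by nlinarith) (by nlinarith)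

lemma MeasureTheory.integral_mul_pos_of_ae_pos {X : Type*} [MeasurableSpace X] {μ : Measure X}
    {g u : X → ℝ} (hg : ∀ᵐ x ∂μ, 0 < g x) (hu : 0 ≤ᵐ[μ] u) (hui : Integrable u μ)
    (hgui : Integrable (fun x => g x * u x) μ) (hpos : 0 < ∫ x, u x ∂μ) :
    0 < ∫ x, g x * u x ∂μ := by
  have hgu : 0 ≤ᵐ[μ] fun x => g x * u x := by
    filter_upwards [hg, hu] with x hgx hux using mul_nonneg hgx.le hux
  have hsupp : Function.support (fun x => g x * u x) =ᵐ[μ] Function.support u :=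
    hg.mono fun x hgx => propext <|
      show x ∈ Function.support (fun x => g x * u x) ↔ x ∈ Function.support u by simp [hgx.ne']
  rw [integral_pos_iff_support_of_nonneg_ae hu hui] at hpos
  rwa [integral_pos_iff_support_of_nonneg_ae hgu hgui, measure_congr hsupp]

section PoissonIntegral

variable {k u : ℝ → ℝ}

lemma integrable_div_add_sq_mul (hk : Continuous k) (hu : Continuous u)
    (hus : HasCompactSupport u) {s : ℝ} (hs : 0 < s) :
    Integrable (fun y => k y / (s + y ^ 2) * u y) :=
  ((hk.div (by fun_prop) fun y => by positivity).mul hu).integrable_of_hasCompactSupport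
    hus.mul_left

lemma integral_div_add_sq_mul_anti (hk : Continuous k) (hk₀ : ∀ y, 0 ≤ k y)
    (hu : Continuous u) (hus : HasCompactSupport u) (hu₀ : ∀ y, 0 ≤ u y)
    {s s' : ℝ} (hs : 0 < s) (hss' : s ≤ s') :
    ∫ y, k y / (s' + y ^ 2) * u y ≤ ∫ y, k y / (s + y ^ 2) * u y := by
  refine integral_mono (integrable_div_add_sq_mul hk hu hus (hs.trans_le hss'))
    (integrable_div_add_sq_mul hk hu hus hs) fun y => ?_
  gcongr
  exacts [hu₀ y, hk₀ y]

end PoissonIntegral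

/-- for `α ∈ (-2,-1)` and `u ≥ 0` continuous with compact support and
`∫ u > 0`, the boundary-axis values
`U(t,0) = (cos(πα/2)/π)∫ t^{1+α}|y|^{-α}/(t²+y²) u(y) dy` tend to `-∞` as `t → 0⁺`. -/
theorem axis_values_tendsto_neg_infinity
    (α : ℝ) (hα : α ∈ Ioo (-2 : ℝ) (-1 : ℝ))
    (u : ℝ → ℝ) (hu : Continuous u) (hus : HasCompactSupport u)
    (hupos : ∀ y : ℝ, 0 ≤ u y) (hint : 0 < ∫ y : ℝ, u y) :
    Tendsto
      (fun t : ℝ => (Real.cos (Real.pi * α / 2) / Real.pi) *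
        ∫ y : ℝ, t ^ (1 + α) * |y| ^ (-α) / (t ^ 2 + y ^ 2) * u y)
      (nhdsWithin 0 (Ioi 0)) atBot := by
  obtain ⟨hα₁, hα₂⟩ := hα
  have hc : Real.cos (Real.pi * α / 2) / Real.pi < 0 :=
    div_neg_of_neg_of_pos (Real.cos_pi_mul_div_two_neg (by linarith) hα₂) Real.pi_pos
  have hk : Continuous fun y : ℝ => |y| ^ (-α) :=
    (Real.continuous_rpow_const (by linarith)).comp continuous_abs
  set J := ∫ y, |y| ^ (-α) / (1 + y ^ 2) * u y
  have hJ : 0 < J := by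
    refine integral_mul_pos_of_ae_pos ?_ (.of_forall hupos)
      (hu.integrable_of_hasCompactSupport hus)
      (integrable_div_add_sq_mul hk hu hus one_pos) hint
    filter_upwards [volume.ae_ne 0] with y hy
    have := abs_pos.mpr hy
    positivity
  refine (tendsto_const_mul_atBot_of_neg hc).mpr <| tendsto_atTop_mono' _ ?_
    ((tendsto_rpow_neg_nhdsGT_zero (by linarith : 1 + α < 0)).atTop_mul_const hJ)
  filter_upwards [Ioc_mem_nhdsGT (zero_lt_one' ℝ)] with t ⟨ht₀, ht₁⟩
  have hJ_le : J ≤ ∫ y, |y| ^ (-α) / (t ^ 2 + y ^ 2) * u y :=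
    integral_div_add_sq_mul_anti hk (fun y => by positivity) hu hus hupos (by positivity)
      (by nlinarith)
  calc t ^ (1 + α) * J
      ≤ t ^ (1 + α) * ∫ y, |y| ^ (-α) / (t ^ 2 + y ^ 2) * u y := by gcongr
    _ = ∫ y, t ^ (1 + α) * |y| ^ (-α) / (t ^ 2 + y ^ 2) * u y := by
      rw [← integral_const_mul]
      simp only [mul_div_assoc, mul_assoc]
end
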